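/- arXiv:1908.03815 — 9 statements merged into one kernel-verified Lean document; each statement's English description precedes it below -/
import Mathlib

section
/- Let G be a full group of homeomorphisms of Cantor space X. Then G is generated by its elements of small support; that is, every g ∈ G is a product of elements of G whose support is contained in some proper closed subset of X. -/
open Set

/-- The group structure on self-homeomorphisms of a topological space,
with `(f * g) x = f (g x)`. -/
instance homeoGroup {X : Type*} [TopologicalSpace X] : Group (X ≃ₜ X) where
  mul f g := g.trans f
  one := Homeomorph.refl X
  inv := Homeomorph.symm
  mul_assoc f g h := Homeomorph.ext fun _ => rfl
  one_mul f := Homeomorph.ext fun _ => rfl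
  mul_one f := Homeomorph.ext fun _ => rfl
  inv_mul_cancel f := Homeomorph.ext fun x => f.symm_apply_apply x

/-- Cantor space, realized concretely as `{0,1}^ℕ`. -/
abbrev Cantor : Type := ℕ → Bool

/-- `h` locally agrees with the group `G`: every point has an open neighbourhood
on which `h` coincides with some element of `G`. -/
def LocallyAgrees {X : Type*} [TopologicalSpace X] (G : Subgroup (X ≃ₜ X)) (h : X ≃ₜ X) : Prop :=
  ∀ x : X, ∃ U : Set X, IsOpen U ∧ x ∈ U ∧ ∃ g ∈ G, Set.EqOn (⇑h) (⇑g) U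

/-- `G` is a full group of homeomorphisms. -/
def IsFull {X : Type*} [TopologicalSpace X] (G : Subgroup (X ≃ₜ X)) : Prop :=
  ∀ h : X ≃ₜ X, LocallyAgrees G h → h ∈ G

/-- `G` is flexible: any proper closed set with nonempty interior can be mapped
into any other by some element of `G`. -/
def IsFlexible {X : Type*} [TopologicalSpace X] (G : Subgroup (X ≃ₜ X)) : Prop :=
  ∀ E₁ E₂ : Set X, IsClosed E₁ → E₁ ≠ Set.univ → (interior E₁).Nonempty →
    IsClosed E₂ → E₂ ≠ Set.univ → (interior E₂).Nonempty →
    ∃ g ∈ G, g '' E₁ ⊆ E₂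

/-- The support of a homeomorphism: the closure of its set of moved points. -/
def supp {X : Type*} [TopologicalSpace X] (g : X ≃ₜ X) : Set X :=
  closure {x | g x ≠ x}

/-- `g` has small support: it is the identity off a proper closed subset. -/
def HasSmallSupport {X : Type*} [TopologicalSpace X] (g : X ≃ₜ X) : Prop :=
  ∃ U : Set X, IsClosed U ∧ U ≠ Set.univ ∧ ∀ x ∉ U, g x = x


section Aux

theorem image_clopen {X : Type*} [TopologicalSpace X] (A : Set X) (g : X ≃ₜ X)
    (hA : IsClopen A) : IsClopen (g '' A) := by
  rw [← congrFun g.preimage_symm A]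
  exact hA.preimage g.symm.continuous

open Classical in
noncomputable def swapMap {X : Type*} [TopologicalSpace X] (g : X ≃ₜ X) (A : Set X) :
    X → X :=
  fun x => if x ∈ A then g x else if x ∈ g '' A then g.symm x else x

variable {X : Type*} [TopologicalSpace X] (g : X ≃ₜ X) (A : Set X)
  (hdis : Disjoint A (g '' A))

theorem swapMap_mem {x : X} (hx : x ∈ A) : swapMap g A x = g x := by
  simp [swapMap, hx]

include hdis in
theorem swapMap_mem_im {x : X} (hx : x ∈ g '' A) : swapMap g A x = g.symm x := by
  have : x ∉ A := fun h => hdis.ne_of_mem h hx rfl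
  simp [swapMap, this, hx]

theorem swapMap_out {x : X} (hx1 : x ∉ A) (hx2 : x ∉ g '' A) : swapMap g A x = x := by
  simp [swapMap, hx1, hx2]

include hdis in
theorem swapMap_invol (x : X) : swapMap g A (swapMap g A x) = x := by
  by_cases h1 : x ∈ A
  · rw [swapMap_mem g A h1, swapMap_mem_im g A hdis ⟨x, h1, rfl⟩, g.symm_apply_apply]
  · by_cases h2 : x ∈ g '' A
    · obtain ⟨a, ha, rfl⟩ := h2
      rw [swapMap_mem_im g A hdis ⟨a, ha, rfl⟩, g.symm_apply_apply, swapMap_mem g A ha]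
    · rw [swapMap_out g A h1 h2, swapMap_out g A h1 h2]

theorem swapMap_continuous (hA : IsClopen A) : Continuous (swapMap g A) := by
  classical
  unfold swapMap
  apply Continuous.if
  · intro a ha
    rw [show {x | x ∈ A} = A from rfl, hA.frontier_eq] at ha
    exact absurd ha (notMem_empty a)
  · exact g.continuous
  · apply Continuous.if
    · intro a ha
      rw [show {x | x ∈ ⇑g '' A} = ⇑g '' A from rfl,
        (image_clopen A g hA).frontier_eq] at ha
      exact absurd ha (notMem_empty a)
    · exact g.symm.continuous
    · exact continuous_id

noncomputable def swapHomeo (hA : IsClopen A) (hdis : Disjoint A (g '' A)) : X ≃ₜ X where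
  toFun := swapMap g A
  invFun := swapMap g A
  left_inv := swapMap_invol g A hdis
  right_inv := swapMap_invol g A hdis
  continuous_toFun := swapMap_continuous g A hA
  continuous_invFun := swapMap_continuous g A hA

end Aux

/-- a full group of homeomorphisms of Cantor space is generated by
its elements of small support. -/
theorem full_group_generated_by_small_support
    (G : Subgroup (Cantor ≃ₜ Cantor)) (hfull : IsFull G) :
    ∀ g ∈ G, ∃ l : List (Cantor ≃ₜ Cantor),
      (∀ f ∈ l, f ∈ G ∧ HasSmallSupport f) ∧ l.prod = g := by
  intro g hg
  by_cases hid : g = 1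
  · exact ⟨[], by simp, by simp [hid]⟩
  -- there is a moved point
  have hmov : ∃ x : Cantor, g x ≠ x := by
    by_contra hc
    push_neg at hc
    exact hid (Homeomorph.ext hc)
  obtain ⟨x, hx⟩ := hmov
  -- a third point z distinct from x and g x
  obtain ⟨z, hz⟩ : ∃ z : Cantor, z ∉ ({x, g x} : Set Cantor) :=
    ((Set.finite_singleton (g x)).insert x).infinite_compl.nonempty
  have hz1 : z ≠ x := fun h => hz (by simp [h])
  have hz2 : z ≠ g x := fun h => hz (by simp [h])
  -- separate x from g x
  obtain ⟨U, V, hU, hV, hxU, hgxV, hUV⟩ := t2_separation (Ne.symm hx)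
  set O : Set Cantor := (U \ {z}) ∩ (⇑g ⁻¹' (V \ {z})) with hO
  have hOopen : IsOpen O := ((hU.sdiff isClosed_singleton).inter
    ((hV.sdiff isClosed_singleton).preimage g.continuous))
  have hxO : x ∈ O := ⟨⟨hxU, fun h => hz1 (by simpa using h.symm)⟩,
    ⟨hgxV, fun h => hz2 (by simpa using h.symm)⟩⟩
  obtain ⟨A, hAcl, hxA, hAO⟩ := compact_exists_isClopen_in_isOpen hOopen hxO
  have hAU : A ⊆ U := fun a ha => (hAO ha).1.1
  have hAz : z ∉ A := fun h => (hAO h).1.2 rfl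
  have hgAV : ⇑g '' A ⊆ V := by
    rintro _ ⟨a, ha, rfl⟩; exact (hAO ha).2.1
  have hgAz : z ∉ ⇑g '' A := by
    rintro ⟨a, ha, hza⟩; exact (hAO ha).2.2 hza
  have hdis : Disjoint A (⇑g '' A) := hUV.mono hAU hgAV
  set h : Cantor ≃ₜ Cantor := swapHomeo g A hAcl hdis with hh
  have hcoe : ⇑h = swapMap g A := rfl
  have hcoeinv : ⇑(h⁻¹) = swapMap g A := rfl
  -- h belongs to G by fullness
  have hhG : h ∈ G := by
    apply hfull
    intro y
    by_cases hy1 : y ∈ A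
    · exact ⟨A, hAcl.isOpen, hy1, g, hg, fun w hw => swapMap_mem g A hw⟩
    · by_cases hy2 : y ∈ ⇑g '' A
      · refine ⟨⇑g '' A, (image_clopen A g hAcl).isOpen, hy2, g⁻¹, inv_mem hg,
          fun w hw => ?_⟩
        rw [hcoe, swapMap_mem_im g A hdis hw]; rfl
      · refine ⟨(A ∪ ⇑g '' A)ᶜ, (hAcl.union (image_clopen A g hAcl)).isClosed.isOpen_compl,
          fun hw => hw.elim hy1 hy2, 1, one_mem G, fun w hw => ?_⟩
        rw [hcoe, swapMap_out g A (fun h' => hw (Or.inl h')) (fun h' => hw (Or.inr h'))]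
        rfl
  refine ⟨[h, h⁻¹ * g], ?_, ?_⟩
  · intro f hf
    rcases List.mem_pair.mp hf with rfl | rfl
    · refine ⟨hhG, A ∪ ⇑g '' A, (hAcl.union (image_clopen A g hAcl)).isClosed, ?_, ?_⟩
      · intro huniv
        have : z ∈ A ∪ ⇑g '' A := huniv ▸ Set.mem_univ z
        exact this.elim hAz hgAz
      · intro w hw
        rw [hcoe, swapMap_out g A (fun h' => hw (Or.inl h')) (fun h' => hw (Or.inr h'))]
    · refine ⟨mul_mem (inv_mem hhG) hg, Aᶜ, hAcl.isOpen.isClosed_compl, ?_, ?_⟩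
      · intro huniv
        exact (huniv ▸ Set.mem_univ x : x ∈ Aᶜ) hxA
      · intro w hw
        have hwA : w ∈ A := not_not.mp hw
        have : (h⁻¹ * g) w = swapMap g A (g w) := rfl
        rw [this, swapMap_mem_im g A hdis ⟨w, hwA, rfl⟩, g.symm_apply_apply]
  · rw [List.prod_cons, List.prod_singleton, ← mul_assoc, mul_inv_cancel, one_mul]
end

section
/- Let G be a full and flexible group of homeomorphisms of Cantor space X. If h is a homeomorphism of X that normalizes G (i.e., h⁻¹Gh = G) and h acts as the identity on some nonempty clopen subset Y of X, then h ∈ G. -/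
open Set

/-!
Around any point `x` of Cantor space choose a proper clopen neighbourhood `U`. Flexibility gives
`g ∈ G` with `g '' U ⊆ Y`; since `h⁻¹` fixes `Y` pointwise, `h` agrees on `U` with
`(h g⁻¹ h⁻¹) g`, which lies in `G` because `h` normalizes `G`. So `h` locally agrees with `G`,
and fullness puts `h` in `G`.
-/

section LocalAgreement

variable {X : Type*} [TopologicalSpace X]

theorem conj_inv_mul_mem_of_mem_normalizer {G : Subgroup (X ≃ₜ X)} {h g : X ≃ₜ X}
    (hnorm : h ∈ Subgroup.normalizer (G : Set (X ≃ₜ X))) (hg : g ∈ G) :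
    h * g⁻¹ * h⁻¹ * g ∈ G :=
  mul_mem ((Subgroup.mem_normalizer_iff.mp hnorm g⁻¹).mp (inv_mem hg)) hg

theorem eqOn_conj_inv_mul_of_mapsTo_fixed {h g : X ≃ₜ X} {U Y : Set X}
    (hgU : MapsTo g U Y) (hid : ∀ y ∈ Y, h y = y) :
    EqOn h (h * g⁻¹ * h⁻¹ * g) U := by
  intro u hu
  have hfix : h.symm (g u) = g u := h.symm_apply_eq.mpr (hid (g u) (hgU hu)).symm
  show h u = h (g.symm (h.symm (g u)))
  rw [hfix, g.symm_apply_apply]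

theorem locallyAgrees_of_isFlexible_of_eqOn_id
    (hX : ∀ x : X, ∃ U : Set X, IsClopen U ∧ x ∈ U ∧ U ≠ univ)
    {G : Subgroup (X ≃ₜ X)} (hflex : IsFlexible G) {h : X ≃ₜ X}
    (hnorm : h ∈ Subgroup.normalizer (G : Set (X ≃ₜ X))) {Y : Set X} (hY : IsClosed Y)
    (hYuniv : Y ≠ univ) (hYint : (interior Y).Nonempty) (hid : ∀ y ∈ Y, h y = y) :
    LocallyAgrees G h := by
  intro x
  obtain ⟨U, hU, hxU, hUuniv⟩ := hX x
  have hUint : (interior U).Nonempty := ⟨x, by rwa [hU.isOpen.interior_eq]⟩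
  obtain ⟨g, hgG, hgU⟩ := hflex U Y hU.isClosed hUuniv hUint hY hYuniv hYint
  exact ⟨U, hU.isOpen, hxU, h * g⁻¹ * h⁻¹ * g, conj_inv_mul_mem_of_mem_normalizer hnorm hgG,
    eqOn_conj_inv_mul_of_mapsTo_fixed (mapsTo_iff_image_subset.mpr hgU) hid⟩

end LocalAgreement

theorem Cantor.exists_isClopen_mem_ne_univ (x : Cantor) :
    ∃ U : Set Cantor, IsClopen U ∧ x ∈ U ∧ U ≠ univ := by
  refine ⟨(fun f : Cantor => f 0) ⁻¹' {x 0},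
    (isClopen_discrete _).preimage (continuous_apply 0), rfl, fun hU => ?_⟩
  have hflip : (fun _ : ℕ => !x 0) ∈ (fun f : Cantor => f 0) ⁻¹' {x 0} := hU ▸ mem_univ _
  exact Bool.not_ne_self (x 0) hflip

/-- if `h` normalizes a full and flexible group `G` and is the
identity on a nonempty clopen set, then `h ∈ G`. -/
theorem normalizer_element_small_support_mem
    (G : Subgroup (Cantor ≃ₜ Cantor)) (hfull : IsFull G) (hflex : IsFlexible G)
    (h : Cantor ≃ₜ Cantor) (hnorm : h ∈ Subgroup.normalizer (G : Set (Cantor ≃ₜ Cantor)))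
    (Y : Set Cantor) (hY : IsClopen Y) (hYne : Y.Nonempty)
    (hid : ∀ x ∈ Y, h x = x) :
    h ∈ G := by
  by_cases hYuniv : Y = univ
  · have h_one : h = 1 := Homeomorph.ext fun x => hid x (hYuniv ▸ mem_univ x)
    exact h_one ▸ one_mem G
  · have hYint : (interior Y).Nonempty := by rwa [hY.isOpen.interior_eq]
    exact hfull h (locallyAgrees_of_isFlexible_of_eqOn_id Cantor.exists_isClopen_mem_ne_univ
      hflex hnorm hY.isClosed hYuniv hYint hid)
end

section
/- Let G be a full and flexible group of homeomorphisms of Cantor space X, and let N denote the normalizer of G in Homeo(X). If h ∈ Homeo(X) satisfies h⁻¹Nh ⊆ N, then h⁻¹Gh ⊆ G. -/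
/-!
An element `f` of the normalizer `N` that fixes the complement of a proper clopen set `E`
already lies in `G`: flexibility gives `g ∈ G` with `g '' E ⊆ Eᶜ`, and then `f` agrees with
`(f g⁻¹ f⁻¹) g ∈ G` on `E` and with `1` on `Eᶜ`, so fullness applies. This property survives
conjugation by `h`. An element `g ∈ G` moving a point `p` factors in `G` as `a * (a⁻¹ g)`, where `a`
swaps a small clopen neighbourhood `V` of `p` with `g '' V` (it lies in `G` by fullness) and `a⁻¹ g`
fixes `V`; both factors fix the complement of a proper clopen set, hence so do their conjugates by
`h`, which lie in `N` by hypothesis and therefore in `G`.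
-/

open Set

namespace Homeomorph

open Classical

variable {X : Type*} [TopologicalSpace X]

theorem isClopen_image {Y : Type*} [TopologicalSpace Y] (h : X ≃ₜ Y) {s : Set X} :
    IsClopen (h '' s) ↔ IsClopen s :=
  h.isClosed_image.and h.isOpen_image

noncomputable def swapFun (g : X ≃ₜ X) (A : Set X) : X → X :=
  A.piecewise g ((g '' A).piecewise g.symm id)

variable {g : X ≃ₜ X} {A : Set X}

theorem swapFun_of_mem {x : X} (hx : x ∈ A) : swapFun g A x = g x :=
  piecewise_eq_of_mem _ _ _ hx

theorem swapFun_of_mem_image {x : X} (hx : x ∉ A) (hgx : x ∈ g '' A) :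
    swapFun g A x = g.symm x := by
  rw [swapFun, piecewise_eq_of_notMem _ _ _ hx, piecewise_eq_of_mem _ _ _ hgx]

theorem swapFun_of_notMem {x : X} (hx : x ∉ A ∪ g '' A) : swapFun g A x = x := by
  rw [mem_union, not_or] at hx
  rw [swapFun, piecewise_eq_of_notMem _ _ _ hx.1, piecewise_eq_of_notMem _ _ _ hx.2, id]

theorem swapFun_involutive (hd : Disjoint A (g '' A)) : Function.Involutive (swapFun g A) := by
  intro x
  by_cases hx : x ∈ A
  · have hgx : g x ∈ g '' A := mem_image_of_mem g hx
    rw [swapFun_of_mem hx, swapFun_of_mem_image (disjoint_right.mp hd hgx) hgx, symm_apply_apply]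
  by_cases hgx : x ∈ g '' A
  · have hx' : g.symm x ∈ A := by rwa [image_eq_preimage_symm] at hgx
    rw [swapFun_of_mem_image hx hgx, swapFun_of_mem hx', apply_symm_apply]
  · have hx' : x ∉ A ∪ g '' A := by simp [hx, hgx]
    rw [swapFun_of_notMem hx', swapFun_of_notMem hx']

theorem continuous_swapFun (hA : IsClopen A) : Continuous (swapFun g A) := by
  have hgA : IsClopen (g '' A) := g.isClopen_image.mpr hA
  refine continuous_piecewise (by simp [hA.frontier_eq]) g.continuous.continuousOn
    (continuous_piecewise (by simp [hgA.frontier_eq]) g.symm.continuous.continuousOn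
      continuousOn_id).continuousOn

noncomputable def swapOn (g : X ≃ₜ X) (A : Set X) (hA : IsClopen A) (hd : Disjoint A (g '' A)) :
    X ≃ₜ X where
  toEquiv := (swapFun_involutive hd).toPerm _
  continuous_toFun := continuous_swapFun hA
  continuous_invFun := continuous_swapFun hA

end Homeomorph

section FullGroup

variable {X : Type*} [TopologicalSpace X] {G : Subgroup (X ≃ₜ X)}

theorem IsFull.exists_mem_eqOn_of_disjoint_image (hG : IsFull G) {g : X ≃ₜ X} (hg : g ∈ G)
    {A : Set X} (hA : IsClopen A) (hd : Disjoint A (g '' A)) :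
    ∃ a ∈ G, EqOn a g A ∧ ∀ x ∉ A ∪ g '' A, a x = x := by
  have hgA : IsClopen (g '' A) := g.isClopen_image.mpr hA
  refine ⟨Homeomorph.swapOn g A hA hd, hG _ fun x => ?_, fun _ => Homeomorph.swapFun_of_mem,
    fun _ => Homeomorph.swapFun_of_notMem⟩
  by_cases hx : x ∈ A
  · exact ⟨A, hA.isOpen, hx, g, hg, fun _ => Homeomorph.swapFun_of_mem⟩
  by_cases hgx : x ∈ g '' A
  · exact ⟨g '' A \ A, (hgA.diff hA).isOpen, ⟨hgx, hx⟩, g⁻¹, inv_mem hg,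
      fun y hy => Homeomorph.swapFun_of_mem_image hy.2 hy.1⟩
  · exact ⟨(A ∪ g '' A)ᶜ, (hA.union hgA).compl.isOpen, by simp [hx, hgx], 1, one_mem G,
      fun y hy => Homeomorph.swapFun_of_notMem hy⟩

theorem IsFull.mem_of_mem_normalizer_of_fixes_compl (hfull : IsFull G) (hflex : IsFlexible G)
    {f : X ≃ₜ X} (hf : f ∈ Subgroup.normalizer (G : Set (X ≃ₜ X))) {E : Set X} (hE : IsClopen E)
    (hE_ne : E ≠ univ) (hfix : ∀ x ∉ E, f x = x) : f ∈ G := by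
  refine hfull f fun x => ?_
  by_cases hx : x ∈ E
  swap
  · exact ⟨Eᶜ, hE.compl.isOpen, hx, 1, one_mem G, hfix⟩
  obtain ⟨g, hg, hgE⟩ := hflex E Eᶜ hE.isClosed hE_ne
    (by rw [hE.isOpen.interior_eq]; exact ⟨x, hx⟩) hE.compl.isClosed (compl_ne_univ.mpr ⟨x, hx⟩)
    (by rw [hE.compl.isOpen.interior_eq]; exact (ne_univ_iff_exists_notMem E).mp hE_ne)
  refine ⟨E, hE.isOpen, hx, f * g⁻¹ * f⁻¹ * g,
    mul_mem ((Subgroup.mem_normalizer_iff.mp hf _).mp (inv_mem hg)) hg, fun y hy => ?_⟩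
  have hfgy : f.symm (g y) = g y :=
    f.symm_apply_eq.mpr (hfix _ (hgE (mem_image_of_mem g hy))).symm
  simp [hfgy]

theorem IsFull.conj_mem_of_fixes_compl (hfull : IsFull G) (hflex : IsFlexible G) {f h : X ≃ₜ X}
    (hN : h⁻¹ * f * h ∈ Subgroup.normalizer (G : Set (X ≃ₜ X))) {E : Set X} (hE : IsClopen E)
    (hE_ne : E ≠ univ) (hfix : ∀ x ∉ E, f x = x) : h⁻¹ * f * h ∈ G := by
  refine hfull.mem_of_mem_normalizer_of_fixes_compl hflex hN (hE.preimage h.continuous)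
    (by rwa [Ne, preimage_eq_univ_iff, h.range_coe, univ_subset_iff]) fun x hx => ?_
  simp [hfix _ hx]

end FullGroup

theorem exists_isClopen_mem_disjoint_image {X : Type*} [TopologicalSpace X]
    [TotallySeparatedSpace X] {g : X ≃ₜ X} {p r : X} (hp : g p ≠ p) (hrp : r ≠ p)
    (hrg : r ≠ g p) : ∃ V, IsClopen V ∧ p ∈ V ∧ Disjoint V (g '' V) ∧ r ∉ V ∪ g '' V := by
  obtain ⟨U₁, hU₁, hpU₁, hgpU₁⟩ := exists_isClopen_of_totally_separated hp.symm
  obtain ⟨U₂, hU₂, hpU₂, hrU₂⟩ := exists_isClopen_of_totally_separated hrp.symm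
  obtain ⟨U₃, hU₃, hpU₃, hgrU₃⟩ := exists_isClopen_of_totally_separated
    (show p ≠ g.symm r from fun e => hrg (by rw [e, g.apply_symm_apply]))
  refine ⟨U₁ ∩ U₂ ∩ U₃ ∩ g ⁻¹' U₁ᶜ,
    ((hU₁.inter hU₂).inter hU₃).inter (hU₁.compl.preimage g.continuous),
    ⟨⟨⟨hpU₁, hpU₂⟩, hpU₃⟩, hgpU₁⟩, ?_, ?_⟩
  · rw [disjoint_left]
    rintro _ hx ⟨y, hy, rfl⟩
    exact hy.2 hx.1.1.1
  · rintro (hr | ⟨y, hy, rfl⟩)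
    · exact hrU₂ hr.1.1.2
    · exact hgrU₃ (by simpa using hy.1.2)

/-- if `h` conjugates the normalizer `N` of a full and flexible
group `G` into `N`, then `h` conjugates `G` into `G`. -/
theorem conj_normalizer_into_normalizer_conj_group_into_group
    (G : Subgroup (Cantor ≃ₜ Cantor)) (hfull : IsFull G) (hflex : IsFlexible G)
    (h : Cantor ≃ₜ Cantor)
    (hN : ∀ f ∈ Subgroup.normalizer (G : Set (Cantor ≃ₜ Cantor)), h⁻¹ * f * h ∈ Subgroup.normalizer (G : Set (Cantor ≃ₜ Cantor))) :
    ∀ g ∈ G, h⁻¹ * g * h ∈ G := by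
  have hconj : ∀ f ∈ G, ∀ E, IsClopen E → E ≠ univ → (∀ x ∉ E, f x = x) → h⁻¹ * f * h ∈ G :=
    fun f hf E => hfull.conj_mem_of_fixes_compl hflex (hN f (Subgroup.le_normalizer hf))
  intro g hg
  by_cases hfixed : ∀ x, g x = x
  · exact hconj g hg ∅ isClopen_empty empty_ne_univ fun x _ => hfixed x
  obtain ⟨p, hp⟩ := not_forall.mp hfixed
  obtain ⟨r, hr⟩ := ({p, g p} : Set Cantor).toFinite.infinite_compl.nonempty
  obtain ⟨V, hV, hpV, hd, hrV⟩ :=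
    exists_isClopen_mem_disjoint_image (r := r) hp (fun e => hr (by simp [e]))
      (fun e => hr (by simp [e]))
  obtain ⟨a, ha, hag, hafix⟩ := hfull.exists_mem_eqOn_of_disjoint_image hg hV hd
  have hfixV : ∀ x ∉ Vᶜ, (a⁻¹ * g) x = x := fun x hx => by
    simp [← hag (not_not.mp hx)]
  rw [show h⁻¹ * g * h = (h⁻¹ * a * h) * (h⁻¹ * (a⁻¹ * g) * h) by group]
  exact mul_mem
    (hconj a ha _ (hV.union (g.isClopen_image.mpr hV)) (fun e => hrV (e ▸ mem_univ r)) hafix)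
    (hconj _ (mul_mem (inv_mem ha) hg) _ hV.compl (compl_ne_univ.mpr ⟨p, hpV⟩) hfixV)
end

section
/- Let G be a full and flexible group of homeomorphisms of Cantor space X. Then the centralizer of G in Homeo(X) is trivial: if h ∈ Homeo(X) commutes with every element of G, then h is the identity. -/
open Set

/-- Cylinder sets form a neighbourhood basis in Cantor space. -/
lemma cylinder_basis {x : Cantor} {O : Set Cantor} (hO : IsOpen O) (hx : x ∈ O) :
    ∃ N, {z : Cantor | ∀ i < N, z i = x i} ⊆ O := by
  have hmem : O ∈ nhds x := hO.mem_nhds hx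
  rw [nhds_pi, Filter.mem_pi] at hmem
  obtain ⟨I, hI, t, ht, hsub⟩ := hmem
  obtain ⟨N, hN⟩ := hI.bddAbove
  refine ⟨N + 1, fun z hz => hsub fun i hi => ?_⟩
  have hzi : z i = x i := hz i (Nat.lt_succ_of_le (hN hi))
  rw [hzi]
  exact mem_of_mem_nhds (ht i)

/-- Cylinder sets are clopen. -/
lemma cylinder_clopen (x : Cantor) (N : ℕ) :
    IsClopen {z : Cantor | ∀ i < N, z i = x i} := by
  have heq : {z : Cantor | ∀ i < N, z i = x i}
      = Set.pi (Set.Iio N) (fun i => {x i}) := by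
    ext z; simp [Set.mem_pi]
  rw [heq]
  constructor
  · exact isClosed_set_pi fun i _ => isClosed_singleton
  · exact isOpen_set_pi (Set.finite_Iio N) fun i _ => isOpen_discrete _

/-- the centralizer in `Homeo(X)` of a full and flexible group of
homeomorphisms of Cantor space is trivial. -/
theorem full_flexible_trivial_centralizer
    (G : Subgroup (Cantor ≃ₜ Cantor)) (hfull : IsFull G) (hflex : IsFlexible G)
    (h : Cantor ≃ₜ Cantor) (hcomm : ∀ g ∈ G, h * g = g * h) :
    h = 1 := by
  by_contra hne
  have hmv : ∃ x, h x ≠ x := by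
    by_contra hall
    push_neg at hall
    exact hne (Homeomorph.ext hall)
  obtain ⟨x, hx⟩ := hmv
  have hcoord : ∃ n, h x n ≠ x n := by
    by_contra hc; push_neg at hc; exact hx (funext hc)
  obtain ⟨n, hn⟩ := hcoord
  -- a third point `w`, distinct from `x` and `h x`
  set w : Cantor := Function.update x (n + 1) (!(x (n + 1))) with hw
  have hwx : w ≠ x := by
    intro hcon
    have := congrFun hcon (n + 1)
    simp [hw] at this
  have hwhx : w ≠ h x := by
    intro hcon
    have h2 := congrFun hcon n
    rw [hw, Function.update_of_ne (by omega)] at h2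
    exact hn h2.symm
  -- an open set around x with all the needed properties
  set O : Set Cantor :=
    (⇑h) ⁻¹' {z | z n = h x n} ∩ {z | z n = x n} ∩ {w}ᶜ ∩ {h.symm w}ᶜ with hO
  have hOopen : IsOpen O := by
    have h1 : IsOpen ({z : Cantor | z n = h x n}) := by
      have he : {z : Cantor | z n = h x n} = (fun z : Cantor => z n) ⁻¹' {h x n} := rfl
      rw [he]; exact (continuous_apply n).isOpen_preimage _ (isOpen_discrete _)
    have h2 : IsOpen ({z : Cantor | z n = x n}) := by
      have he : {z : Cantor | z n = x n} = (fun z : Cantor => z n) ⁻¹' {x n} := rfl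
      rw [he]; exact (continuous_apply n).isOpen_preimage _ (isOpen_discrete _)
    exact (((h1.preimage h.continuous).inter h2).inter isClosed_singleton.isOpen_compl).inter
      isClosed_singleton.isOpen_compl
  have hxO : x ∈ O := by
    refine ⟨⟨⟨rfl, rfl⟩, ?_⟩, ?_⟩
    · exact fun hcon => hwx (Set.mem_singleton_iff.mp hcon).symm
    · intro hcon
      have : x = h.symm w := hcon
      have : h x = w := by rw [this, h.apply_symm_apply]
      exact hwhx this.symm
  obtain ⟨N, hNsub⟩ := cylinder_basis hOopen hxO
  set A := {z : Cantor | ∀ i < N, z i = x i} with hA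
  have hAclopen := cylinder_clopen x N
  have hxA : x ∈ A := fun i _ => rfl
  -- key disjointness : h a ≠ z for a, z ∈ A
  have hdisj : ∀ z ∈ A, ∀ a ∈ A, h a ≠ z := by
    intro z hz a ha hcon
    have hz1 : z n = x n := (hNsub hz).1.1.2
    have ha1 : h a n = h x n := (hNsub ha).1.1.1
    rw [hcon, hz1] at ha1
    exact hn ha1.symm
  -- w avoids A and h '' A
  have hwA : w ∉ A := fun hcon => (hNsub hcon).1.2 rfl
  have hwhA : w ∉ (⇑h) '' A := by
    rintro ⟨a, haA, hae⟩
    exact (hNsub haA).2 (by rw [← hae]; exact (h.symm_apply_apply a).symm)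
  -- apply flexibility to E₁ = A ∪ h '' A, E₂ = A
  have hAclosed : IsClosed A := hAclopen.1
  have hhAclosed : IsClosed ((⇑h) '' A) := h.isClosedMap _ hAclosed
  have hE₁ne : A ∪ (⇑h) '' A ≠ Set.univ := by
    intro hcon
    have : w ∈ A ∪ (⇑h) '' A := hcon ▸ Set.mem_univ w
    rcases this with hc | hc
    · exact hwA hc
    · exact hwhA hc
  have hAne : A ≠ Set.univ := fun hcon => hwA (hcon ▸ Set.mem_univ w)
  have hAint : (interior A).Nonempty :=
    ⟨x, by rwa [hAclopen.2.interior_eq]⟩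
  have hE₁int : (interior (A ∪ (⇑h) '' A)).Nonempty := by
    refine ⟨x, ?_⟩
    have : A ⊆ interior (A ∪ (⇑h) '' A) :=
      hAclopen.2.subset_interior_iff.mpr Set.subset_union_left
    exact this hxA
  obtain ⟨g, hgG, hg⟩ := hflex (A ∪ (⇑h) '' A) A (hAclosed.union hhAclosed)
    hE₁ne hE₁int hAclosed hAne hAint
  -- derive contradiction from commutativity
  have key : h (g x) = g (h x) := congrArg (fun f : Cantor ≃ₜ Cantor => f x) (hcomm g hgG)
  have hgx : g x ∈ A := hg ⟨x, Or.inl hxA, rfl⟩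
  have hghx : g (h x) ∈ A := hg ⟨h x, Or.inr ⟨x, hxA, rfl⟩, rfl⟩
  exact hdisj (g (h x)) hghx (g x) hgx key
end

section
/- Let G be a full and flexible group of homeomorphisms of Cantor space X. For every nonidentity g ∈ G there exists a nonempty clopen set E ⊆ X such that E ∩ g(E) = ∅ and E ∪ g(E) ≠ X. -/
open Set

/-- for every nonidentity element `g` of a full and flexible group,
there is a nonempty clopen set `E` with `E ∩ g(E) = ∅` and `E ∪ g(E) ≠ X`. -/
theorem exists_clopen_moved_off_itself
    (G : Subgroup (Cantor ≃ₜ Cantor)) (hfull : IsFull G) (hflex : IsFlexible G)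
    (g : Cantor ≃ₜ Cantor) (hg : g ∈ G) (hg1 : g ≠ 1) :
    ∃ E : Set Cantor, IsClopen E ∧ E.Nonempty ∧
      E ∩ (g '' E) = ∅ ∧ E ∪ (g '' E) ≠ Set.univ := by
  -- pick x moved by g
  obtain ⟨x, hx⟩ : ∃ x, g x ≠ x := by
    by_contra h
    push_neg at h
    exact hg1 (Homeomorph.ext h)
  -- pick y distinct from x and g x
  obtain ⟨y, hy⟩ : ∃ y : Cantor, y ∉ ({x, g x} : Set Cantor) :=
    ((Set.finite_singleton (g x)).insert x).infinite_compl.nonempty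
  simp only [Set.mem_insert_iff, Set.mem_singleton_iff, not_or] at hy
  obtain ⟨hyx, hygx⟩ := hy
  -- separate x and g x by a clopen set
  obtain ⟨V, hV, hxV, hgxV⟩ := exists_isClopen_of_totally_separated (Ne.symm hx)
  -- the open set O
  set O : Set Cantor := V ∩ g ⁻¹' Vᶜ ∩ {y}ᶜ ∩ {g.symm y}ᶜ with hO
  have hOopen : IsOpen O := by
    apply IsOpen.inter
    apply IsOpen.inter
    apply IsOpen.inter hV.2
    · exact hV.1.isOpen_compl.preimage g.continuous
    · exact isOpen_compl_singleton
    · exact isOpen_compl_singleton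
  have hxO : x ∈ O := by
    refine ⟨⟨⟨hxV, hgxV⟩, ?_⟩, ?_⟩
    · simpa using Ne.symm hyx
    · simp only [Set.mem_compl_iff, Set.mem_singleton_iff]
      intro h
      exact hygx (by rw [h, Homeomorph.apply_symm_apply])
  obtain ⟨E, hEclopen, hxE, hEO⟩ := compact_exists_isClopen_in_isOpen hOopen hxO
  refine ⟨E, hEclopen, ⟨x, hxE⟩, ?_, ?_⟩
  · apply Set.eq_empty_iff_forall_notMem.2
    rintro z ⟨hzE, w, hwE, rfl⟩
    exact (hEO hwE).1.1.2 (hEO hzE).1.1.1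
  · intro h
    have : y ∈ E ∪ g '' E := h ▸ Set.mem_univ y
    rcases this with hyE | ⟨w, hwE, hwy⟩
    · exact (hEO hyE).1.2 rfl
    · exact (hEO hwE).2 (by simp [← hwy])
end

section
/- Let G be a full and flexible group of homeomorphisms of Cantor space X, and let N be the normalizer of G in Homeo(X). Then every element of N normalizes N; more precisely, the normalizer of N in Homeo(X) equals N itself. -/
open Set

/-! Conjugation preserves small support, so the subgroup generated by the small-support elements
of `N` is normalized by everything that normalizes `N`. For `G` full and flexible this subgroup is
`G` itself. A small-support `f ∈ N` agrees, on a proper clopen `V` containing its support, with the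
commutator `f g f⁻¹ g⁻¹ ∈ G` for any `g ∈ G` mapping `V` into its complement (flexibility), and
equals the identity off `V`, so `f ∈ G` by fullness. Conversely, for `g ∈ G` and a small clopen `V`
disjoint from `g V`, the element `f ∈ G` that is `g` on `V`, `g⁻¹` on `g V` and the identity
elsewhere has small support, as does `g f`, and `g = (g f) f⁻¹`. -/

section Homeo

variable {X : Type*} [TopologicalSpace X]

theorem HasSmallSupport.conj {f : X ≃ₜ X} (hf : HasSmallSupport f) (h : X ≃ₜ X) :
    HasSmallSupport (h * f * h⁻¹) := by
  obtain ⟨U, hU, hUne, hfix⟩ := hf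
  refine ⟨h '' U, h.isClosed_image.mpr hU, ?_, fun x hx => ?_⟩
  · rwa [Ne, ← image_univ_of_surjective h.surjective, h.injective.image_injective.eq_iff]
  · have hx' : h.symm x ∉ U := fun hmem => hx ⟨_, hmem, h.apply_symm_apply x⟩
    simp [hfix _ hx']

theorem eqOn_commutator_of_image_subset_compl {f g : X ≃ₜ X} {V : Set X}
    (hfix : ∀ x ∉ V, f x = x) (hgV : g '' V ⊆ Vᶜ) : EqOn f (f * g * f⁻¹ * g⁻¹) V := by
  intro x hx
  have hx' : g.symm x ∉ V := fun h => hgV ⟨_, h, g.apply_symm_apply x⟩ hx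
  simp [f.symm_apply_eq.mpr (hfix _ hx').symm]

theorem IsClopen.image_homeomorph {V : Set X} (hV : IsClopen V) (g : X ≃ₜ X) :
    IsClopen (g '' V) :=
  ⟨g.isClosed_image.mpr hV.isClosed, g.isOpen_image.mpr hV.isOpen⟩

theorem IsFull.mem_of_eqOn_of_eqOn {G : Subgroup (X ≃ₜ X)} (hG : IsFull G) {f a b : X ≃ₜ X}
    {U V : Set X} (hU : IsOpen U) (hV : IsOpen V) (hUV : IsClosed (U ∪ V))
    (ha : a ∈ G) (hb : b ∈ G) (hfa : EqOn f a U) (hfb : EqOn f b V)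
    (hfix : ∀ x ∉ U ∪ V, f x = x) : f ∈ G := by
  refine hG f fun x => ?_
  by_cases hxU : x ∈ U
  · exact ⟨U, hU, hxU, a, ha, hfa⟩
  by_cases hxV : x ∈ V
  · exact ⟨V, hV, hxV, b, hb, hfb⟩
  exact ⟨(U ∪ V)ᶜ, hUV.isOpen_compl, by simp [hxU, hxV], 1, one_mem G, fun y hy => hfix y hy⟩

theorem exists_eqOn_eqOn_symm_of_disjoint_image (g : X ≃ₜ X) {V : Set X} (hV : IsClopen V)
    (hdisj : Disjoint V (g '' V)) :
    ∃ f : X ≃ₜ X, EqOn f g V ∧ EqOn f g.symm (g '' V) ∧ ∀ x ∉ V ∪ g '' V, f x = x := by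
  classical
  have hgV : IsClopen (g '' V) := hV.image_homeomorph g
  set F : X → X := V.piecewise g ((g '' V).piecewise g.symm id)
  have hF_V : EqOn F g V := fun x hx => piecewise_eq_of_mem _ _ _ hx
  have hF_gV : EqOn F g.symm (g '' V) := fun x hx => by
    simp only [F, piecewise_eq_of_notMem _ _ _ (disjoint_right.mp hdisj hx),
      piecewise_eq_of_mem _ _ _ hx]
  have hF_out : ∀ x ∉ V ∪ g '' V, F x = x := fun x hx => by
    rw [mem_union, not_or] at hx
    simp only [F, piecewise_eq_of_notMem _ _ _ hx.1, piecewise_eq_of_notMem _ _ _ hx.2, id]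
  have hF : Function.Involutive F := by
    intro x
    by_cases hxV : x ∈ V
    · rw [hF_V hxV, hF_gV (mem_image_of_mem g hxV), g.symm_apply_apply]
    by_cases hxgV : x ∈ g '' V
    · obtain ⟨v, hv, rfl⟩ := hxgV
      rw [hF_gV (mem_image_of_mem g hv), g.symm_apply_apply, hF_V hv]
    · have hx : x ∉ V ∪ g '' V := by simp [hxV, hxgV]
      rw [hF_out x hx, hF_out x hx]
  have hF_cont : Continuous F :=
    g.continuous.piecewise (by simp [hV.frontier_eq]) <|
      g.symm.continuous.piecewise (by simp [hgV.frontier_eq]) continuous_id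
  exact ⟨⟨hF.toPerm F, hF_cont, hF_cont⟩, hF_V, hF_gV, hF_out⟩

def smallSupportClosure (H : Subgroup (X ≃ₜ X)) : Subgroup (X ≃ₜ X) :=
  Subgroup.closure {f | f ∈ H ∧ HasSmallSupport f}

theorem normalizer_le_normalizer_smallSupportClosure (H : Subgroup (X ≃ₜ X)) :
    Subgroup.normalizer (H : Set (X ≃ₜ X)) ≤
      Subgroup.normalizer (smallSupportClosure H : Set (X ≃ₜ X)) :=
  Subgroup.le_normalizer_closure_iff.mpr fun h hh f ⟨hfH, hf⟩ =>
    Subgroup.subset_closure ⟨(Subgroup.mem_normalizer_iff.mp hh f).mp hfH, hf.conj h⟩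

end Homeo

section StoneSpace

variable {X : Type*} [TopologicalSpace X] [CompactSpace X] [T2Space X]
  [TotallyDisconnectedSpace X]

theorem exists_isClopen_disjoint_image {g : X ≃ₜ X} {x y : X} (hx : g x ≠ x) (hyx : y ≠ x)
    (hygx : y ≠ g x) :
    ∃ V : Set X, IsClopen V ∧ x ∈ V ∧ Disjoint V (g '' V) ∧ y ∉ V ∪ g '' V := by
  obtain ⟨A, B, hA, hB, hxA, hgxB, hAB⟩ := t2_separation hx.symm
  have hO : IsOpen (A ∩ {y}ᶜ ∩ g ⁻¹' (B ∩ {y}ᶜ)) :=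
    (hA.inter isOpen_compl_singleton).inter
      ((hB.inter isOpen_compl_singleton).preimage g.continuous)
  obtain ⟨V, hV, hxV, hVO⟩ :=
    compact_exists_isClopen_in_isOpen hO ⟨⟨hxA, hyx.symm⟩, hgxB, hygx.symm⟩
  refine ⟨V, hV, hxV, disjoint_left.mpr ?_, ?_⟩
  · rintro z hzV ⟨w, hwV, rfl⟩
    exact disjoint_left.mp hAB (hVO hzV).1.1 (hVO hwV).2.1
  · rintro (hyV | ⟨w, hwV, rfl⟩)
    · exact (hVO hyV).1.2 rfl
    · exact (hVO hwV).2.2 rfl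

variable {G : Subgroup (X ≃ₜ X)}

theorem IsFull.mem_of_mem_normalizer_of_hasSmallSupport (hfull : IsFull G)
    (hflex : IsFlexible G) {f : X ≃ₜ X} (hfN : f ∈ Subgroup.normalizer (G : Set (X ≃ₜ X)))
    (hf : HasSmallSupport f) : f ∈ G := by
  obtain ⟨U, hU, hUne, hfix⟩ := hf
  rcases U.eq_empty_or_nonempty with rfl | ⟨u, hu⟩
  · have hf1 : f = 1 := Homeomorph.ext fun x => hfix x (notMem_empty x)
    exact hf1 ▸ one_mem G
  obtain ⟨p, hp⟩ := (ne_univ_iff_exists_notMem U).mp hUne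
  obtain ⟨W, hW, hpW, hWU⟩ := compact_exists_isClopen_in_isOpen hU.isOpen_compl hp
  have hUW : U ⊆ Wᶜ := subset_compl_comm.mp hWU
  have hWc_ne : Wᶜ ≠ univ := (ne_univ_iff_exists_notMem _).mpr ⟨p, not_not.mpr hpW⟩
  have hW_ne : W ≠ univ := (ne_univ_iff_exists_notMem _).mpr ⟨u, hUW hu⟩
  obtain ⟨g, hg, hgW⟩ := hflex Wᶜ W hW.compl.isClosed hWc_ne
    (by rw [hW.compl.isOpen.interior_eq]; exact ⟨u, hUW hu⟩) hW.isClosed hW_ne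
    (by rw [hW.isOpen.interior_eq]; exact ⟨p, hpW⟩)
  have hfixW : ∀ x ∉ Wᶜ, f x = x := fun x hx => hfix x (fun h => hx (hUW h))
  have hcomm : f * g * f⁻¹ * g⁻¹ ∈ G :=
    mul_mem ((Subgroup.mem_normalizer_iff.mp hfN g).mp hg) (inv_mem hg)
  have hagree := eqOn_commutator_of_image_subset_compl hfixW (by simpa using hgW)
  exact hfull.mem_of_eqOn_of_eqOn hW.compl.isOpen hW.compl.isOpen (by simpa using hW.isOpen)
    hcomm hcomm hagree hagree (by simpa using hfixW)

theorem IsFull.le_smallSupportClosure [Infinite X] (hfull : IsFull G) :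
    G ≤ smallSupportClosure G := by
  intro g hg
  by_cases hg1 : g = 1
  · exact hg1 ▸ one_mem _
  obtain ⟨x, hx⟩ : ∃ x, g x ≠ x := by
    by_contra! h
    exact hg1 (Homeomorph.ext h)
  obtain ⟨y, hy⟩ := ({x, g x} : Set X).toFinite.infinite_compl.nonempty
  obtain ⟨hyx, hygx⟩ : y ≠ x ∧ y ≠ g x := by simpa [not_or] using hy
  obtain ⟨V, hV, hxV, hdisj, hyV⟩ := exists_isClopen_disjoint_image hx hyx hygx
  obtain ⟨f, hfV, hfgV, hfix⟩ := exists_eqOn_eqOn_symm_of_disjoint_image g hV hdisj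
  have hgV : IsClopen (g '' V) := hV.image_homeomorph g
  have hf : f ∈ G :=
    hfull.mem_of_eqOn_of_eqOn hV.isOpen hgV.isOpen (hV.union hgV).isClosed hg (inv_mem hg)
      hfV hfgV hfix
  have hf_small : HasSmallSupport f :=
    ⟨V ∪ g '' V, (hV.union hgV).isClosed, (ne_univ_iff_exists_notMem _).mpr ⟨y, hyV⟩, hfix⟩
  have hgf_small : HasSmallSupport (g * f) := by
    refine ⟨(g '' V)ᶜ, hgV.isOpen.isClosed_compl,
      (ne_univ_iff_exists_notMem _).mpr ⟨g x, not_not.mpr (mem_image_of_mem g hxV)⟩, ?_⟩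
    intro z hz
    simp [hfgV (notMem_compl_iff.mp hz)]
  have hgf : g * f ∈ G := mul_mem hg hf
  rw [← mul_inv_cancel_right g f]
  exact mul_mem (Subgroup.subset_closure ⟨hgf, hgf_small⟩)
    (inv_mem (Subgroup.subset_closure ⟨hf, hf_small⟩))

theorem IsFull.smallSupportClosure_normalizer_eq [Infinite X] (hfull : IsFull G)
    (hflex : IsFlexible G) : smallSupportClosure (Subgroup.normalizer (G : Set (X ≃ₜ X))) = G := by
  refine le_antisymm ?_ (hfull.le_smallSupportClosure.trans ?_)
  · rw [smallSupportClosure, Subgroup.closure_le]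
    exact fun f ⟨hfN, hf⟩ => hfull.mem_of_mem_normalizer_of_hasSmallSupport hflex hfN hf
  · exact Subgroup.closure_mono fun f ⟨hfG, hf⟩ => ⟨Subgroup.le_normalizer hfG, hf⟩

end StoneSpace

theorem normalizer_of_normalizer_eq_general
    (G : Subgroup (Cantor ≃ₜ Cantor)) (hfull : IsFull G) (hflex : IsFlexible G) :
    Subgroup.normalizer ((Subgroup.normalizer (G : Set (Cantor ≃ₜ Cantor)) : Set (Cantor ≃ₜ Cantor))) = Subgroup.normalizer (G : Set (Cantor ≃ₜ Cantor)) := by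
  refine le_antisymm ?_ Subgroup.le_normalizer
  have h := normalizer_le_normalizer_smallSupportClosure
    (Subgroup.normalizer (G : Set (Cantor ≃ₜ Cantor)))
  rwa [hfull.smallSupportClosure_normalizer_eq hflex] at h

/-- if every automorphism of the full flexible group `G` (resp. of
its normalizer `N`) is induced by conjugation by a unique homeomorphism, then
the normalizer of `N` in `Homeo(X)` equals `N`. -/
theorem normalizer_of_normalizer_eq
    (G : Subgroup (Cantor ≃ₜ Cantor)) (hfull : IsFull G) (hflex : IsFlexible G)
    (hRubinG : ∀ φ : G ≃* G, ∃! h : Cantor ≃ₜ Cantor,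
      ∀ g : G, ((φ g : G) : Cantor ≃ₜ Cantor) = h⁻¹ * (g : Cantor ≃ₜ Cantor) * h)
    (hRubinN : ∀ φ : Subgroup.normalizer (G : Set (Cantor ≃ₜ Cantor)) ≃* Subgroup.normalizer (G : Set (Cantor ≃ₜ Cantor)), ∃! h : Cantor ≃ₜ Cantor,
      ∀ g : Subgroup.normalizer (G : Set (Cantor ≃ₜ Cantor)),
        ((φ g : Subgroup.normalizer (G : Set (Cantor ≃ₜ Cantor))) : Cantor ≃ₜ Cantor) = h⁻¹ * (g : Cantor ≃ₜ Cantor) * h) :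
    Subgroup.normalizer ((Subgroup.normalizer (G : Set (Cantor ≃ₜ Cantor)) : Set (Cantor ≃ₜ Cantor))) = Subgroup.normalizer (G : Set (Cantor ≃ₜ Cantor)) :=
  normalizer_of_normalizer_eq_general G hfull hflex
end

section
/- Let G be a group acting faithfully by homeomorphisms on Cantor space X such that for every x ∈ X and open neighbourhood U of x, the set {g(x) : g ∈ G, g = id on X \ U} is dense in U. Then the centralizer of G in Homeo(X) is trivial. -/
open Set

lemma cantor_singleton_not_open (x : Cantor) : ¬ IsOpen ({x} : Set Cantor) := by
  intro hop
  rw [isOpen_pi_iff] at hop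
  obtain ⟨I, u, hu, hsub⟩ := hop x rfl
  obtain ⟨m, hm⟩ := I.exists_notMem
  have : Function.update x m (!x m) ∈ (I : Set ℕ).pi u := by
    intro i hi
    rw [Function.update_of_ne (by rintro rfl; exact hm hi)]
    exact (hu i hi).2
  have := congrFun (hsub this) m
  simp at this

/-- a group of homeomorphisms of Cantor space satisfying the local
transitivity condition of Rubin's theorem has trivial centralizer in `Homeo(X)`. -/
theorem rubin_condition_trivial_centralizer
    (G : Subgroup (Cantor ≃ₜ Cantor))
    (hdense : ∀ (x : Cantor) (U : Set Cantor), IsOpen U → x ∈ U →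
      U ⊆ closure {y : Cantor | ∃ g ∈ G, (∀ z ∉ U, g z = z) ∧ g x = y})
    (h : Cantor ≃ₜ Cantor) (hcomm : ∀ g ∈ G, h * g = g * h) :
    h = 1 := by
  by_contra hne
  have : ∃ x, h x ≠ x := by
    by_contra hc
    push_neg at hc
    exact hne (Homeomorph.ext hc)
  obtain ⟨x, hx⟩ := this
  obtain ⟨n, hn⟩ := Function.ne_iff.mp hx
  set U : Set Cantor := {y | y n = x n} ∩ (⇑h) ⁻¹' {y | (y : Cantor) n = (h x) n} with hU
  have hUopen : IsOpen U := by
    apply IsOpen.inter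
    · show IsOpen ((fun y : Cantor => y n) ⁻¹' {x n})
      exact (isOpen_discrete _).preimage (continuous_apply n)
    · show IsOpen (⇑h ⁻¹' ((fun y : Cantor => y n) ⁻¹' {(h x) n}))
      exact ((isOpen_discrete _).preimage (continuous_apply n)).preimage h.continuous
  have hxU : x ∈ U := ⟨rfl, rfl⟩
  have hhxU : h x ∉ U := fun hmem => hn hmem.1
  have hsub : U ⊆ closure {y | ∃ g ∈ G, (∀ z ∉ U, g z = z) ∧ g x = y} :=
    hdense x U hUopen hxU
  have hS : {y | ∃ g ∈ G, (∀ z ∉ U, g z = z) ∧ g x = y} ⊆ {x} := by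
    rintro y ⟨g, hg, hsupp, rfl⟩
    have h1 : g (h x) = h x := hsupp _ hhxU
    have h2 : h (g x) = g (h x) := congrArg (fun f => (f : Cantor ≃ₜ Cantor) x) (hcomm g hg)
    exact h.injective (h2.trans h1)
  have hUx : U ⊆ {x} := hsub.trans (closure_minimal hS isClosed_singleton)
  have : U = {x} := hUx.antisymm (by rintro y rfl; exact hxU)
  exact cantor_singleton_not_open x (this ▸ hUopen)
end

section
/- Thompson's group V acting on Cantor space {0,1}^ℕ is flexible: for any proper closed subsets E₁, E₂ of {0,1}^ℕ with nonempty interior, there exists g ∈ V with g(E₁) ⊆ E₂. -/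
open Set

/-- Concatenation of a finite binary word with an infinite binary sequence. -/
def bcat (a : List Bool) (ρ : ℕ → Bool) : ℕ → Bool :=
  fun k => if h : k < a.length then a.get ⟨k, h⟩ else ρ (k - a.length)

/-- `a` is a prefix of the infinite sequence `ρ`. -/
def IsPrefixOfSeq (a : List Bool) (ρ : ℕ → Bool) : Prop :=
  ∀ i : Fin a.length, ρ i = a.get i

/-- `u` lists a complete antichain of finite binary words: the words are
pairwise incomparable under the prefix order and every infinite binary
sequence has one of them as a prefix. -/
def IsCompleteAntichain {m : ℕ} (u : Fin m → List Bool) : Prop :=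
  (∀ i j : Fin m, i ≠ j → ¬ (u i <+: u j)) ∧
  (∀ ρ : ℕ → Bool, ∃ i : Fin m, IsPrefixOfSeq (u i) ρ)

/-- Membership in Thompson's group `V`, as prefix-exchange homeomorphisms of
Cantor space `{0,1}^ℕ`. -/
def MemV (h : Cantor ≃ₜ Cantor) : Prop :=
  ∃ (m : ℕ) (u v : Fin m → List Bool) (σ : Equiv.Perm (Fin m)),
    IsCompleteAntichain u ∧ IsCompleteAntichain v ∧
    ∀ (i : Fin m) (ρ : ℕ → Bool), h (bcat (u i) ρ) = bcat (v (σ i)) ρ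

namespace Dev

/-- drop the first `|w|` coordinates -/
def dseq (w : List Bool) (ρ : Cantor) : Cantor := fun k => ρ (k + w.length)

lemma bcat_lt (w : List Bool) (ρ : Cantor) {k : ℕ} (h : k < w.length) :
    bcat w ρ k = w[k] := by simp [bcat, h]

lemma bcat_ge (w : List Bool) (ρ : Cantor) {k : ℕ} (h : w.length ≤ k) :
    bcat w ρ k = ρ (k - w.length) := by simp [bcat, Nat.not_lt.2 h]

lemma P_iff (w : List Bool) (ρ : Cantor) :
    IsPrefixOfSeq w ρ ↔ ∀ k (h : k < w.length), ρ k = w[k] := by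
  constructor
  · intro H k h; exact H ⟨k, h⟩
  · intro H i; exact H i i.isLt

lemma P_bcat (w : List Bool) (ρ : Cantor) : IsPrefixOfSeq w (bcat w ρ) := by
  rw [P_iff]; intro k h; exact bcat_lt w ρ h

lemma dseq_bcat (w : List Bool) (ρ : Cantor) : dseq w (bcat w ρ) = ρ := by
  funext k
  simp [dseq, bcat_ge w ρ (Nat.le_add_left _ _)]

lemma bcat_dseq {w : List Bool} {ρ : Cantor} (h : IsPrefixOfSeq w ρ) :
    bcat w (dseq w ρ) = ρ := by
  funext k
  by_cases hk : k < w.length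
  · rw [bcat_lt w _ hk, (P_iff w ρ).1 h k hk]
  · rw [bcat_ge w _ (Nat.not_lt.1 hk)]
    simp [dseq, Nat.sub_add_cancel (Nat.not_lt.1 hk)]

lemma bcat_append (w z : List Bool) (ρ : Cantor) :
    bcat (w ++ z) ρ = bcat w (bcat z ρ) := by
  funext k
  by_cases h1 : k < w.length
  · rw [bcat_lt _ _ (by simp; omega), bcat_lt _ _ h1, List.getElem_append_left h1]
  · push_neg at h1
    rw [bcat_ge _ _ h1]
    by_cases h2 : k < w.length + z.length
    · rw [bcat_lt _ _ (by simp; omega), bcat_lt _ _ (by omega),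
        List.getElem_append_right (by omega)]
    · push_neg at h2
      rw [bcat_ge _ _ (by simp; omega), bcat_ge _ _ (by omega)]
      congr 1; simp; omega

lemma P_append (w z : List Bool) (ρ : Cantor) :
    IsPrefixOfSeq (w ++ z) ρ ↔ IsPrefixOfSeq w ρ ∧ IsPrefixOfSeq z (dseq w ρ) := by
  simp only [P_iff]
  constructor
  · intro H
    refine ⟨fun k h => ?_, fun k h => ?_⟩
    · rw [H k (by simp; omega), List.getElem_append_left h]
    · have := H (k + w.length) (by simp; omega)
      rw [List.getElem_append_right (by omega)] at this
      simpa [dseq] using this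
  · rintro ⟨H1, H2⟩ k h
    by_cases hk : k < w.length
    · rw [List.getElem_append_left hk]; exact H1 k hk
    · push_neg at hk
      rw [List.getElem_append_right (by omega)]
      have := H2 (k - w.length) (by simp at h; omega)
      simpa [dseq, Nat.sub_add_cancel hk] using this

/-- branch word: agree with `w` up to `k`, then flip. -/
def br (w : List Bool) (k : ℕ) : List Bool := w.take k ++ [!(w.getD k false)]

lemma bool_flip {x y : Bool} (h : x ≠ y) : x = !y := by
  cases x <;> cases y <;> simp_all

lemma br_length {w : List Bool} {k : ℕ} (h : k < w.length) : (br w k).length = k + 1 := by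
  simp [br]; omega

lemma br_get_lt {w : List Bool} {k j : ℕ} (hk : k < w.length) (hj : j < k) :
    (br w k)[j]'(by rw [br_length hk]; omega) = w[j]'(by omega) := by
  unfold br
  rw [List.getElem_append_left (by simp; omega), List.getElem_take]

lemma br_get_self {w : List Bool} {k : ℕ} (hk : k < w.length) :
    (br w k)[k]'(by rw [br_length hk]; omega) = !(w[k]'hk) := by
  unfold br
  rw [List.getElem_append_right (by simp)]
  simp [List.getD, List.getElem?_eq_getElem hk]

/-- if sequences differ at a common coordinate, no prefix relation -/
lemma not_prefix_of_differ {x y : List Bool} {k : ℕ} (hx : k < x.length)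
    (hy : k < y.length) (h : x[k] ≠ y[k]) : ¬ x <+: y := by
  intro hp; exact h (hp.getElem hx)

lemma P_br_of_not_P {w : List Bool} {ρ : Cantor} (h : ¬ IsPrefixOfSeq w ρ) :
    ∃ k, ∃ hk : k < w.length, IsPrefixOfSeq (br w k) ρ := by
  rw [P_iff] at h; push_neg at h
  have hex : ∃ k, k < w.length ∧ ρ k ≠ w.getD k false := by
    obtain ⟨k, hk, hne⟩ := h
    exact ⟨k, hk, by rwa [List.getD_eq_getElem _ _ hk]⟩
  classical
  obtain ⟨hk, hne⟩ := Nat.find_spec hex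
  refine ⟨Nat.find hex, hk, ?_⟩
  rw [P_iff]
  intro j hj
  rw [br_length hk] at hj
  rcases Nat.lt_or_ge j (Nat.find hex) with hjk | hjk
  · rw [br_get_lt hk hjk]
    have hmin := Nat.find_min hex hjk
    push_neg at hmin
    have hjw : j < w.length := by omega
    have h2 := hmin hjw
    rwa [List.getD_eq_getElem _ _ hjw] at h2
  · have hje : j = Nat.find hex := by omega
    subst hje
    rw [br_get_self hk]
    rw [List.getD_eq_getElem _ _ hk] at hne
    exact bool_flip hne

/-- evaluation: a sequence with prefix w has w's values -/
lemma P_eval {w : List Bool} {ρ : Cantor} (h : IsPrefixOfSeq w ρ) {k : ℕ}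
    (hk : k < w.length) : ρ k = w[k] := (P_iff w ρ).1 h k hk

/-- bcat of br differs from w at k, so not prefixed by w -/
lemma not_P_of_br {w : List Bool} {k : ℕ} (hk : k < w.length) (ρ : Cantor) :
    ¬ IsPrefixOfSeq w (bcat (br w k) ρ) := by
  intro H
  have h1 := P_eval H hk
  have h2 : bcat (br w k) ρ k = !(w[k]'hk) := by
    rw [bcat_lt _ _ (by rw [br_length hk]; omega), br_get_self hk]
  rw [h1] at h2
  exact (Bool.eq_not_self _).mp h2


open Classical in
/-- the prefix exchange map determined by words `a`, `b`. -/
noncomputable def F (a b : List Bool) (ρ : Cantor) : Cantor :=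
  if IsPrefixOfSeq (a ++ b) ρ then bcat (b ++ a) (dseq (a ++ b) ρ)
  else if IsPrefixOfSeq a ρ then dseq a ρ
  else bcat b ρ

lemma F_eq1 {a b : List Bool} {ρ : Cantor} (h : IsPrefixOfSeq (a ++ b) ρ) :
    F a b ρ = bcat (b ++ a) (dseq (a ++ b) ρ) := by rw [F, if_pos h]

lemma F_eq2 {a b : List Bool} {ρ : Cantor} (h1 : ¬ IsPrefixOfSeq (a ++ b) ρ)
    (h2 : IsPrefixOfSeq a ρ) : F a b ρ = dseq a ρ := by rw [F, if_neg h1, if_pos h2]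

lemma F_eq3 {a b : List Bool} {ρ : Cantor} (h : ¬ IsPrefixOfSeq a ρ) :
    F a b ρ = bcat b ρ := by
  rw [F, if_neg (fun hh => h ((P_append a b ρ).1 hh).1), if_neg h]

lemma F_inv (a b : List Bool) (ρ : Cantor) : F b a (F a b ρ) = ρ := by
  classical
  by_cases h1 : IsPrefixOfSeq (a ++ b) ρ
  · rw [F_eq1 h1, F_eq1 (P_bcat _ _), dseq_bcat, bcat_dseq h1]
  · by_cases h2 : IsPrefixOfSeq a ρ
    · rw [F_eq2 h1 h2]
      have hb : ¬ IsPrefixOfSeq b (dseq a ρ) := by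
        intro hb; exact h1 ((P_append a b ρ).2 ⟨h2, hb⟩)
      rw [F_eq3 hb, bcat_dseq h2]
    · rw [F_eq3 h2]
      have hba : ¬ IsPrefixOfSeq (b ++ a) (bcat b ρ) := by
        intro hba
        have := ((P_append b a _).1 hba).2
        rw [dseq_bcat] at this
        exact h2 this
      rw [F_eq2 hba (P_bcat _ _), dseq_bcat]

/-- coordinate dependence of F -/
lemma P_of_agree {w : List Bool} {ρ σ : Cantor} {N : ℕ} (hw : w.length ≤ N)
    (hag : ∀ k < N, ρ k = σ k) (h : IsPrefixOfSeq w ρ) : IsPrefixOfSeq w σ := by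
  rw [P_iff] at h ⊢
  intro k hk
  rw [← hag k (by omega)]
  exact h k hk

lemma P_agree_iff {w : List Bool} {ρ σ : Cantor} {N : ℕ} (hw : w.length ≤ N)
    (hag : ∀ k < N, ρ k = σ k) : IsPrefixOfSeq w ρ ↔ IsPrefixOfSeq w σ :=
  ⟨P_of_agree hw hag, P_of_agree hw (fun k hk => (hag k hk).symm)⟩

lemma F_dep (a b : List Bool) (n : ℕ) (ρ σ : Cantor)
    (hag : ∀ k < n + a.length + b.length + 1, ρ k = σ k) : F a b ρ n = F a b σ n := by
  classical
  have hab : (a ++ b).length ≤ n + a.length + b.length + 1 := by simp; omega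
  have ha : a.length ≤ n + a.length + b.length + 1 := by omega
  by_cases h1 : IsPrefixOfSeq (a ++ b) ρ
  · rw [F_eq1 h1, F_eq1 ((P_agree_iff hab hag).1 h1)]
    by_cases hn : n < (b ++ a).length
    · rw [bcat_lt _ _ hn, bcat_lt _ _ hn]
    · push_neg at hn
      rw [bcat_ge _ _ hn, bcat_ge _ _ hn]
      exact hag _ (by simp at hn ⊢; omega)
  · have h1' : ¬ IsPrefixOfSeq (a ++ b) σ := fun h => h1 ((P_agree_iff hab hag).2 h)
    by_cases h2 : IsPrefixOfSeq a ρ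
    · rw [F_eq2 h1 h2, F_eq2 h1' ((P_agree_iff ha hag).1 h2)]
      exact hag _ (by omega)
    · rw [F_eq3 h2, F_eq3 (fun h => h2 ((P_agree_iff ha hag).2 h))]
      by_cases hn : n < b.length
      · rw [bcat_lt _ _ hn, bcat_lt _ _ hn]
      · push_neg at hn
        rw [bcat_ge _ _ hn, bcat_ge _ _ hn]
        exact hag _ (by omega)

/-- a map whose n-th output coordinate depends on finitely many input coordinates
is continuous -/
lemma continuous_of_dep (f : Cantor → Cantor) (N : ℕ → ℕ)
    (h : ∀ n ρ σ, (∀ k < N n, ρ k = σ k) → f ρ n = f σ n) : Continuous f := by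
  apply continuous_pi
  intro n
  have key : (fun ρ => f ρ n) =
      (fun x : Fin (N n) → Bool => f (fun k => if hk : k < N n then x ⟨k, hk⟩ else false) n)
        ∘ (fun ρ (i : Fin (N n)) => ρ i) := by
    funext ρ
    exact h n ρ _ (fun k hk => by rw [dif_pos hk])
  rw [key]
  exact (continuous_of_discreteTopology).comp (continuous_pi fun i => continuous_apply (i : ℕ))

/-- F as a homeomorphism -/
noncomputable def Fh (a b : List Bool) : Cantor ≃ₜ Cantor where
  toFun := F a b
  invFun := F b a
  left_inv := F_inv a b
  right_inv := F_inv b a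
  continuous_toFun := continuous_of_dep (F a b) (fun n => n + a.length + b.length + 1)
    (F_dep a b)
  continuous_invFun := continuous_of_dep (F b a) (fun n => n + b.length + a.length + 1)
    (F_dep b a)


/-- incomparability of branch words -/
lemma br_br_not_prefix {w : List Bool} {k l : ℕ} (hk : k < w.length) (hl : l < w.length)
    (hne : k ≠ l) : ¬ br w k <+: br w l := by
  rcases Nat.lt_or_ge k l with h | h
  · refine not_prefix_of_differ (x := br w k) (y := br w l)
      (k := k) (by rw [br_length hk]; omega) (by rw [br_length hl]; omega) ?_
    rw [br_get_self hk, br_get_lt hl h]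
    cases w[k] <;> simp
  · have h' : l < k := by omega
    refine not_prefix_of_differ (x := br w k) (y := br w l)
      (k := l) (by rw [br_length hk]; omega) (by rw [br_length hl]; omega) ?_
    rw [br_get_lt hk h', br_get_self hl]
    cases w[l] <;> simp

lemma br_append_not_prefix {w z : List Bool} {k : ℕ} (hk : k < w.length) :
    ¬ br w k <+: w ++ z := by
  refine not_prefix_of_differ (k := k) (by rw [br_length hk]; omega)
    (by simp; omega) ?_
  rw [br_get_self hk, List.getElem_append_left hk]
  cases w[k] <;> simp

lemma append_br_not_prefix {w z : List Bool} {k : ℕ} (hk : k < w.length) :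
    ¬ w ++ z <+: br w k := by
  refine not_prefix_of_differ (k := k) (by simp; omega)
    (by rw [br_length hk]; omega) ?_
  rw [br_get_self hk, List.getElem_append_left hk]
  cases w[k] <;> simp

lemma br_self_not_prefix {w : List Bool} {k : ℕ} (hk : k < w.length) :
    ¬ br w k <+: w := by
  have := br_append_not_prefix (z := ([] : List Bool)) hk
  rwa [List.append_nil] at this

lemma self_br_not_prefix {w : List Bool} {k : ℕ} (hk : k < w.length) :
    ¬ w <+: br w k := by
  have := append_br_not_prefix (z := ([] : List Bool)) hk
  rwa [List.append_nil] at this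

/-- the complete antichain refining `[a]` along `b` -/
def W (a b : List Bool) : Fin (a.length + b.length + 1) → List Bool := fun i =>
  if h : (i : ℕ) < a.length then br a i
  else if h2 : (i : ℕ) < a.length + b.length then a ++ br b (i - a.length)
  else a ++ b

lemma W_lt {a b : List Bool} {i : Fin (a.length + b.length + 1)} (h : (i : ℕ) < a.length) :
    W a b i = br a i := by rw [W, dif_pos h]

lemma W_mid {a b : List Bool} {i : Fin (a.length + b.length + 1)}
    (h : a.length ≤ (i : ℕ)) (h2 : (i : ℕ) < a.length + b.length) :
    W a b i = a ++ br b (i - a.length) := by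
  rw [W, dif_neg (by omega), dif_pos h2]

lemma W_last {a b : List Bool} {i : Fin (a.length + b.length + 1)}
    (h : a.length + b.length ≤ (i : ℕ)) : W a b i = a ++ b := by
  rw [W, dif_neg (by omega), dif_neg (by omega)]

lemma W_complete (a b : List Bool) (ρ : Cantor) :
    ∃ i : Fin (a.length + b.length + 1), IsPrefixOfSeq (W a b i) ρ := by
  by_cases ha : IsPrefixOfSeq a ρ
  · by_cases hb : IsPrefixOfSeq b (dseq a ρ)
    · refine ⟨⟨a.length + b.length, by omega⟩, ?_⟩
      rw [W_last (by simp)]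
      exact (P_append a b ρ).2 ⟨ha, hb⟩
    · obtain ⟨k, hk, hbr⟩ := P_br_of_not_P hb
      refine ⟨⟨a.length + k, by omega⟩, ?_⟩
      rw [W_mid (by simp) (by simp; omega)]
      have hsub : a.length + k - a.length = k := by omega
      rw [hsub]
      exact (P_append a (br b k) ρ).2 ⟨ha, hbr⟩
  · obtain ⟨k, hk, hbr⟩ := P_br_of_not_P ha
    exact ⟨⟨k, by omega⟩, by rw [W_lt (by simpa using hk)]; exact hbr⟩

lemma W_antichain (a b : List Bool) :
    ∀ i j : Fin (a.length + b.length + 1), i ≠ j → ¬ (W a b i <+: W a b j) := by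
  intro i j hne
  have hij : (i : ℕ) ≠ (j : ℕ) := fun h => hne (Fin.ext h)
  have hi := i.isLt
  have hj := j.isLt
  by_cases hi1 : (i : ℕ) < a.length
  · rw [W_lt hi1]
    by_cases hj1 : (j : ℕ) < a.length
    · rw [W_lt hj1]; exact br_br_not_prefix hi1 hj1 hij
    · by_cases hj2 : (j : ℕ) < a.length + b.length
      · rw [W_mid (by omega) hj2]; exact br_append_not_prefix hi1
      · rw [W_last (by omega)]; exact br_append_not_prefix hi1
  · by_cases hi2 : (i : ℕ) < a.length + b.length
    · rw [W_mid (by omega) hi2]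
      by_cases hj1 : (j : ℕ) < a.length
      · rw [W_lt hj1]; exact append_br_not_prefix hj1
      · by_cases hj2 : (j : ℕ) < a.length + b.length
        · rw [W_mid (by omega) hj2, List.prefix_append_right_inj]
          exact br_br_not_prefix (by omega) (by omega) (by omega)
        · rw [W_last (by omega), List.prefix_append_right_inj]
          exact br_self_not_prefix (by omega)
    · rw [W_last (by omega)]
      by_cases hj1 : (j : ℕ) < a.length
      · rw [W_lt hj1]; exact append_br_not_prefix hj1
      · have hj2 : (j : ℕ) < a.length + b.length := by omega
        rw [W_mid (by omega) hj2, List.prefix_append_right_inj]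
        exact self_br_not_prefix (by omega)

lemma W_isCompleteAntichain (a b : List Bool) : IsCompleteAntichain (W a b) :=
  ⟨W_antichain a b, W_complete a b⟩

/-- block-swap permutation -/
def blockSwap (n m : ℕ) : Equiv.Perm (Fin (n + m + 1)) where
  toFun i := ⟨if (i : ℕ) < n then m + i else if (i : ℕ) < n + m then i - n else i,
    by have := i.isLt; split_ifs <;> omega⟩
  invFun i := ⟨if (i : ℕ) < m then n + i else if (i : ℕ) < n + m then i - m else i,
    by have := i.isLt; split_ifs <;> omega⟩
  left_inv i := by
    have := i.isLt
    apply Fin.ext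
    simp only
    split_ifs <;> omega
  right_inv i := by
    have := i.isLt
    apply Fin.ext
    simp only
    split_ifs <;> omega

/-- the target complete antichain: same index type as `W a b` -/
def V (a b : List Bool) : Fin (a.length + b.length + 1) → List Bool := fun i =>
  if h : (i : ℕ) < b.length then br b i
  else if h2 : (i : ℕ) < a.length + b.length then b ++ br a (i - b.length)
  else b ++ a

lemma V_lt {a b : List Bool} {i : Fin (a.length + b.length + 1)} (h : (i : ℕ) < b.length) :
    V a b i = br b i := by rw [V, dif_pos h]

lemma V_mid {a b : List Bool} {i : Fin (a.length + b.length + 1)}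
    (h : b.length ≤ (i : ℕ)) (h2 : (i : ℕ) < a.length + b.length) :
    V a b i = b ++ br a (i - b.length) := by
  rw [V, dif_neg (by omega), dif_pos h2]

lemma V_last {a b : List Bool} {i : Fin (a.length + b.length + 1)}
    (h : a.length + b.length ≤ (i : ℕ)) : V a b i = b ++ a := by
  rw [V, dif_neg (by omega), dif_neg (by omega)]

lemma V_complete (a b : List Bool) (ρ : Cantor) :
    ∃ i : Fin (a.length + b.length + 1), IsPrefixOfSeq (V a b i) ρ := by
  by_cases hb : IsPrefixOfSeq b ρ
  · by_cases ha : IsPrefixOfSeq a (dseq b ρ)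
    · refine ⟨⟨a.length + b.length, by omega⟩, ?_⟩
      rw [V_last (by simp)]
      exact (P_append b a ρ).2 ⟨hb, ha⟩
    · obtain ⟨k, hk, hbr⟩ := P_br_of_not_P ha
      refine ⟨⟨b.length + k, by omega⟩, ?_⟩
      rw [V_mid (by simp) (by simp; omega)]
      have hsub : b.length + k - b.length = k := by omega
      rw [hsub]
      exact (P_append b (br a k) ρ).2 ⟨hb, hbr⟩
  · obtain ⟨k, hk, hbr⟩ := P_br_of_not_P hb
    exact ⟨⟨k, by omega⟩, by rw [V_lt (by simpa using hk)]; exact hbr⟩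

lemma V_antichain (a b : List Bool) :
    ∀ i j : Fin (a.length + b.length + 1), i ≠ j → ¬ (V a b i <+: V a b j) := by
  intro i j hne
  have hij : (i : ℕ) ≠ (j : ℕ) := fun h => hne (Fin.ext h)
  have hi := i.isLt
  have hj := j.isLt
  by_cases hi1 : (i : ℕ) < b.length
  · rw [V_lt hi1]
    by_cases hj1 : (j : ℕ) < b.length
    · rw [V_lt hj1]; exact br_br_not_prefix hi1 hj1 hij
    · by_cases hj2 : (j : ℕ) < a.length + b.length
      · rw [V_mid (by omega) hj2]; exact br_append_not_prefix hi1
      · rw [V_last (by omega)]; exact br_append_not_prefix hi1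
  · by_cases hi2 : (i : ℕ) < a.length + b.length
    · rw [V_mid (by omega) hi2]
      by_cases hj1 : (j : ℕ) < b.length
      · rw [V_lt hj1]; exact append_br_not_prefix hj1
      · by_cases hj2 : (j : ℕ) < a.length + b.length
        · rw [V_mid (by omega) hj2, List.prefix_append_right_inj]
          exact br_br_not_prefix (by omega) (by omega) (by omega)
        · rw [V_last (by omega), List.prefix_append_right_inj]
          exact br_self_not_prefix (by omega)
    · rw [V_last (by omega)]
      by_cases hj1 : (j : ℕ) < b.length
      · rw [V_lt hj1]; exact append_br_not_prefix hj1
      · have hj2 : (j : ℕ) < a.length + b.length := by omega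
        rw [V_mid (by omega) hj2, List.prefix_append_right_inj]
        exact self_br_not_prefix (by omega)

lemma blockSwap_val {n m : ℕ} (i : Fin (n + m + 1)) :
    ((blockSwap n m i : Fin (n + m + 1)) : ℕ) =
      if (i : ℕ) < n then m + i else if (i : ℕ) < n + m then (i : ℕ) - n else i := rfl

lemma memV_Fh (a b : List Bool) : MemV (Fh a b) := by
  classical
  refine ⟨a.length + b.length + 1, W a b, V a b, blockSwap a.length b.length,
    W_isCompleteAntichain a b, ⟨V_antichain a b, V_complete a b⟩, ?_⟩
  intro i ρ
  have hi := i.isLt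
  show F a b (bcat (W a b i) ρ) = _
  by_cases hi1 : (i : ℕ) < a.length
  · have hσ : ((blockSwap a.length b.length i : Fin _) : ℕ) = b.length + i := by
      rw [blockSwap_val, if_pos hi1]
    rw [W_lt hi1, F_eq3 (not_P_of_br hi1 ρ), V_mid (by omega) (by omega), hσ,
      ← bcat_append]
    have he : b.length + (i : ℕ) - b.length = (i : ℕ) := by omega
    rw [he]
  · by_cases hi2 : (i : ℕ) < a.length + b.length
    · have hσ : ((blockSwap a.length b.length i : Fin _) : ℕ) = (i : ℕ) - a.length := by
        rw [blockSwap_val, if_neg hi1, if_pos hi2]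
      have hk : (i : ℕ) - a.length < b.length := by omega
      rw [W_mid (by omega) hi2, bcat_append]
      have hnP : ¬ IsPrefixOfSeq (a ++ b) (bcat a (bcat (br b ((i : ℕ) - a.length)) ρ)) := by
        intro h
        have := ((P_append a b _).1 h).2
        rw [dseq_bcat] at this
        exact not_P_of_br hk ρ this
      rw [F_eq2 hnP (P_bcat _ _), dseq_bcat, V_lt (by omega), hσ]
    · have hσ : ((blockSwap a.length b.length i : Fin _) : ℕ) = (i : ℕ) := by
        rw [blockSwap_val, if_neg hi1, if_neg hi2]
      rw [W_last (by omega), F_eq1 (P_bcat _ _), dseq_bcat, V_last (by omega)]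

/-- every point of an open set has a cylinder neighbourhood inside it -/
lemma exists_cyl {U : Set Cantor} (hU : IsOpen U) {x : Cantor} (hx : x ∈ U) :
    ∃ w : List Bool, IsPrefixOfSeq w x ∧ ∀ ρ, IsPrefixOfSeq w ρ → ρ ∈ U := by
  obtain ⟨I, u, hIu, hsub⟩ := isOpen_pi_iff.1 hU x hx
  refine ⟨List.ofFn (fun j : Fin (I.sup id + 1) => x j), ?_, ?_⟩
  · rw [P_iff]
    intro k hk
    rw [List.getElem_ofFn]
  · intro ρ hρ
    apply hsub
    rw [Set.mem_pi]
    intro i hi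
    have hiN : i < I.sup id + 1 := by
      have := Finset.le_sup (f := id) hi
      simp at this
      omega
    have hx' : ρ i = x i := by
      have := (P_iff _ ρ).1 hρ i (by simpa using hiN)
      rwa [List.getElem_ofFn] at this
    rw [hx']
    exact (hIu i hi).2

end Dev

/-- Thompson's group `V` acting on Cantor space is flexible. -/
theorem thompsonV_flexible (E₁ E₂ : Set Cantor)
    (h₁c : IsClosed E₁) (h₁p : E₁ ≠ Set.univ) (h₁i : (interior E₁).Nonempty)
    (h₂c : IsClosed E₂) (h₂p : E₂ ≠ Set.univ) (h₂i : (interior E₂).Nonempty) :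
    ∃ g : Cantor ≃ₜ Cantor, MemV g ∧ g '' E₁ ⊆ E₂ := by
  obtain ⟨x₁, hx₁⟩ := (Set.ne_univ_iff_exists_notMem E₁).1 h₁p
  obtain ⟨a, -, ha⟩ := Dev.exists_cyl h₁c.isOpen_compl (show x₁ ∈ E₁ᶜ from hx₁)
  obtain ⟨x₂, hx₂⟩ := h₂i
  obtain ⟨b, -, hb⟩ := Dev.exists_cyl isOpen_interior hx₂
  refine ⟨Dev.Fh a b, Dev.memV_Fh a b, ?_⟩
  rintro _ ⟨ρ, hρ, rfl⟩
  have hnPa : ¬ IsPrefixOfSeq a ρ := fun h => (ha ρ h) hρ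
  show Dev.F a b ρ ∈ E₂
  rw [Dev.F_eq3 hnPa]
  exact interior_subset (hb _ (Dev.P_bcat b ρ))
end

section
/- Let G ≤ Homeo⁺(S¹) act o-3-transitively on a dense subset D of the circle S¹ (for any two increasing triples of points of D lying in a common closed arc, some g ∈ G maps the first triple to the second). Then the centralizer of G in Homeo(S¹) is trivial. -/
/-- The circle `S¹ = ℝ/ℤ`. -/
abbrev Circ : Type := AddCircle (1 : ℝ)

/-- A homeomorphism of the circle is orientation preserving if it admits a
monotone lift to `ℝ` commuting with translation by `1`. -/
def OrientPres (g : Circ ≃ₜ Circ) : Prop :=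
  ∃ F : ℝ → ℝ, Monotone F ∧
    (∀ t : ℝ, g ((t : ℝ) : Circ) = ((F t : ℝ) : Circ)) ∧
    (∀ t : ℝ, F (t + 1) = F t + 1)

lemma circ_eq_iff (a b : ℝ) : ((a : Circ) = (b : Circ)) ↔ ∃ k : ℤ, b = a + k := by
  constructor
  · intro hab
    obtain ⟨k, hk⟩ := (QuotientAddGroup.eq_iff_sub_mem ..).mp hab
    refine ⟨-k, ?_⟩
    have : (k : ℝ) = a - b := by simpa using hk
    push_cast
    linarith
  · rintro ⟨k, rfl⟩
    rw [QuotientAddGroup.eq_iff_sub_mem]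
    exact ⟨-k, by simp⟩

lemma dense_hit (D : Set Circ) (hD : Dense D) (a b : ℝ) (hab : a < b) :
    ∃ t : ℝ, a < t ∧ t < b ∧ (↑t : Circ) ∈ D := by
  have hmid : (a+b)/2 ∈ Set.Ioo a b := ⟨by linarith, by linarith⟩
  have hopen : IsOpen ((↑) '' (Set.Ioo a b) : Set Circ) :=
    QuotientAddGroup.isOpenMap_coe _ isOpen_Ioo
  obtain ⟨d, hdD, hdm⟩ := hD.exists_mem_open hopen ⟨_, Set.mem_image_of_mem _ hmid⟩
  obtain ⟨t, ht, rfl⟩ := hdm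
  exact ⟨t, ht.1, ht.2, hdD⟩

lemma int_pin {m n : ℤ} {a b : ℝ} (h1 : 0 ≤ a - b + (m - n)) (h2 : a - b + (m - n) ≤ 1)
    (h3 : 0 < a - b) (h4 : a - b < 1) : m = n := by
  have e1 : ((m - n : ℤ) : ℝ) < 1 := by push_cast; linarith
  have e2 : (-1 : ℝ) < ((m - n : ℤ) : ℝ) := by push_cast; linarith
  have e1' : m - n < 1 := by exact_mod_cast e1
  have e2' : -1 < m - n := by exact_mod_cast e2
  omega

/-- a group of orientation-preserving homeomorphisms of the
circle acting o-3-transitively on a dense subset `D` (any increasing triple of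
points of `D` in a common closed arc can be mapped to any other) has trivial
centralizer in `Homeo(S¹)`. -/
theorem o3transitive_trivial_centralizer
    (G : Subgroup (Circ ≃ₜ Circ)) (horient : ∀ g ∈ G, OrientPres g)
    (D : Set Circ) (hD : Dense D)
    (htrans : ∀ t₁ t₂ t₃ s₁ s₂ s₃ : ℝ,
      t₁ < t₂ → t₂ < t₃ → t₃ - t₁ < 1 →
      s₁ < s₂ → s₂ < s₃ → s₃ - s₁ < 1 →
      ((t₁ : Circ) ∈ D) → ((t₂ : Circ) ∈ D) → ((t₃ : Circ) ∈ D) →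
      ((s₁ : Circ) ∈ D) → ((s₂ : Circ) ∈ D) → ((s₃ : Circ) ∈ D) →
      ∃ g ∈ G, g (t₁ : Circ) = (s₁ : Circ) ∧ g (t₂ : Circ) = (s₂ : Circ) ∧
        g (t₃ : Circ) = (s₃ : Circ))
    (h : Circ ≃ₜ Circ) (hcomm : ∀ g ∈ G, h * g = g * h) :
    h = 1 := by
  haveI : Fact ((0:ℝ) < 1) := ⟨zero_lt_one⟩
  -- Step 1: h fixes every point of D.
  have key : ∀ x0 : ℝ, (↑x0 : Circ) ∈ D → h (↑x0 : Circ) = ↑x0 := by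
    intro x0 hx0
    by_contra hne
    -- representative of h x0 in [x0, x0+1)
    set y0 : ℝ := (AddCircle.equivIco 1 x0 (h (↑x0 : Circ)) : ℝ) with hy0def
    have hy0mem : y0 ∈ Set.Ico x0 (x0 + 1) := (AddCircle.equivIco 1 x0 (h (↑x0 : Circ))).2
    have hy0 : ((y0 : ℝ) : Circ) = h (↑x0 : Circ) :=
      (AddCircle.equivIco 1 x0).symm_apply_apply (h (↑x0 : Circ))
    have hy0ne : y0 ≠ x0 := by
      intro hyx; exact hne (by rw [← hy0, hyx])
    have hxy : x0 < y0 := lt_of_le_of_ne hy0mem.1 (Ne.symm hy0ne)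
    have hyx1 : y0 < x0 + 1 := hy0mem.2
    -- pick points of D
    obtain ⟨t₁, ht₁l, ht₁r, ht₁D⟩ := dense_hit D hD (y0 - 1) x0 (by linarith)
    obtain ⟨t₃, ht₃l, ht₃r, ht₃D⟩ := dense_hit D hD x0 y0 (by linarith)
    obtain ⟨u, hul, hur, huD⟩ := dense_hit D hD y0 (t₁ + 1) (by linarith)
    -- get g ∈ G sending (t₁, x0, t₃) to (t₁, x0, u)
    obtain ⟨g, hgG, hg1, hg2, hg3⟩ :=
      htrans t₁ x0 t₃ t₁ x0 u ht₁r ht₃l (by linarith) ht₁r (by linarith) (by linarith)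
        ht₁D hx0 ht₃D ht₁D hx0 huD
    -- g fixes h x0 = y0
    have hcg : ∀ z : Circ, h (g z) = g (h z) := fun z =>
      Homeomorph.ext_iff.mp (hcomm g hgG) z
    have hgy : g ((y0 : ℝ) : Circ) = ((y0 : ℝ) : Circ) := by
      rw [hy0, ← hcg, hg2]
    -- use the monotone lift of g
    obtain ⟨F, hFmono, hFlift, hFper⟩ := horient g hgG
    obtain ⟨n, hn⟩ := (circ_eq_iff (F t₁) t₁).mp (by rw [← hFlift]; exact hg1)
    obtain ⟨m, hm⟩ := (circ_eq_iff (F y0) y0).mp (by rw [← hFlift]; exact hgy)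
    obtain ⟨j, hj⟩ := (circ_eq_iff (F t₃) u).mp (by rw [← hFlift]; exact hg3)
    -- hence F t₁ = t₁ - n, F y0 = y0 - m, F t₃ = u - j
    have hFt₁ : F t₁ = t₁ - n := by linarith
    have hFy0 : F y0 = y0 - m := by linarith
    have hFt₃ : F t₃ = u - j := by linarith
    have hFt₁1 : F (t₁ + 1) = t₁ + 1 - n := by rw [hFper]; linarith
    -- pin m = n
    have hmono1 : F t₁ ≤ F y0 := hFmono (by linarith)
    have hmono2 : F y0 ≤ F (t₁ + 1) := hFmono (by linarith)
    have hmn : n = m := by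
      refine int_pin (a := y0) (b := t₁) (m := n) (n := m) ?_ ?_ (by linarith) (by linarith)
      · rw [hFt₁, hFy0] at hmono1; push_cast; linarith
      · rw [hFy0, hFt₁1] at hmono2; push_cast; linarith
    -- pin j = n
    have hmono3 : F t₁ ≤ F t₃ := hFmono (by linarith)
    have hmono4 : F t₃ ≤ F (t₁ + 1) := hFmono (by linarith)
    have hjn : n = j := by
      refine int_pin (a := u) (b := t₁) (m := n) (n := j) ?_ ?_ (by linarith) (by linarith)
      · rw [hFt₁, hFt₃] at hmono3; push_cast; linarith
      · rw [hFt₃, hFt₁1] at hmono4; push_cast; linarith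
    -- contradiction with monotonicity: t₃ < y0 but F t₃ = u - n > y0 - n = F y0
    have hmono5 : F t₃ ≤ F y0 := hFmono (le_of_lt ht₃r)
    rw [hFt₃, hFy0, ← hjn, ← hmn] at hmono5
    linarith
  -- Step 2: h agrees with the identity on D, hence everywhere.
  have hfix : ∀ x ∈ D, h x = x := by
    intro x hx
    obtain ⟨x0, rfl⟩ := QuotientAddGroup.mk_surjective x
    exact key x0 hx
  have : (h : Circ → Circ) = id := by
    apply Continuous.ext_on hD h.continuous continuous_id
    intro x hx
    exact hfix x hx
  apply Homeomorph.ext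
  intro x
  exact congrFun this x
end
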